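/- arXiv:2408.08672 — 2 statements merged into one kernel-verified Lean document; each statement's English description precedes it below -/
import Mathlib

section
/- Fix λ_i ∈ [0,1) for each of n qubits. Let O be an n-qubit operator supported on a set of ℓ qubits. Then its Q1 norm satisfies ‖O‖_{Q1} ≤ 4^ℓ · ‖O‖_∞. Equivalently, since the dual-Wauli coefficients of O are c_α = Tr(Q_α O), one has ∑_α |Tr(Q_α O)| ≤ 4^ℓ · ‖O‖_∞. -/
namespace SSP

noncomputable section

open Matrix
open scoped ComplexOrder

/-- Computational basis labels for `n` qubits. -/
abbrev Idx (n : ℕ) := Fin n → Fin 2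

/-- Operators (matrices) on the Hilbert space of `n` qubits. -/
abbrev Op (n : ℕ) := Matrix (Idx n) (Idx n) ℂ

/-- Super-operators on `n` qubits. -/
abbrev SOp (n : ℕ) := Op n →ₗ[ℂ] Op n

/-- The operator norm (largest singular value) of a complex matrix. -/
noncomputable def opNorm {m : Type*} [Fintype m] [DecidableEq m]
    (M : Matrix m m ℂ) : ℝ :=
  ‖Matrix.toEuclideanCLM (𝕜 := ℂ) M‖

/-- A density matrix: positive semidefinite with unit trace. -/
def IsDensity {n : ℕ} (ρ : Op n) : Prop := ρ.PosSemidef ∧ ρ.trace = 1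

/-- An operator is supported on the set `S` of qubits if it has the form
`Ô_S ⊗ 1` on the remaining qubits. -/
def SupportedOn {n : ℕ} (S : Set (Fin n)) (M : Op n) : Prop :=
  (∀ x y : Idx n, (∃ i ∉ S, x i ≠ y i) → M x y = 0) ∧
  (∀ x y x' y' : Idx n,
      (∀ i ∈ S, x i = x' i) → (∀ i ∈ S, y i = y' i) →
      (∀ i ∉ S, x i = y i) → (∀ i ∉ S, x' i = y' i) → M x y = M x' y')

/-- The support of an operator: the smallest set of qubits supporting it
(the intersection of all supporting sets). -/
def suppOp {n : ℕ} (M : Op n) : Set (Fin n) :=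
  {i | ∀ S : Set (Fin n), SupportedOn S M → i ∈ S}

/-- `E` is a quantum channel (CPTP map) acting only on the qubits in `S`:
it has a Kraus representation whose Kraus operators are all supported on `S`. -/
def IsChannelOn {n : ℕ} (S : Set (Fin n)) (E : SOp n) : Prop :=
  ∃ (m : ℕ) (F : Fin m → Op n),
    (∀ j, SupportedOn S (F j)) ∧
    (∑ j, (F j)ᴴ * F j = 1) ∧
    (∀ ρ, E ρ = ∑ j, F j * ρ * (F j)ᴴ)

/-- A quantum channel on the whole system. -/
def IsChannel {n : ℕ} (E : SOp n) : Prop := IsChannelOn Set.univ E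

/-- `Estar` is the adjoint of `E` with respect to the Hilbert–Schmidt
inner product `⟨A,B⟩ = Tr(A†B)`. -/
def IsHSAdjoint {n : ℕ} (E Estar : SOp n) : Prop :=
  ∀ A B : Op n, ((Estar A)ᴴ * B).trace = (Aᴴ * (E B)).trace

/-- An ergodic channel: it has a unique fixed point among density matrices,
this fixed point is full rank (positive definite), and there is no other
eigenvalue of modulus one. -/
def IsErgodic {n : ℕ} (E : SOp n) : Prop :=
  (∃ σ : Op n, IsDensity σ ∧ σ.PosDef ∧ E σ = σ ∧
      ∀ ρ : Op n, IsDensity ρ → E ρ = ρ → ρ = σ) ∧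
  (∀ μ : ℂ, Module.End.HasEigenvalue (E : Module.End ℂ (Op n)) μ → μ = 1 ∨ ‖μ‖ < 1)

/-- The set of qubits (endpoints) of an edge. -/
def edgeQubits {n : ℕ} (e : Sym2 (Fin n)) : Set (Fin n) := {i | i ∈ e}

/-- Finset of endpoints of an edge. -/
def edgeFinset' {n : ℕ} (e : Sym2 (Fin n)) : Finset (Fin n) :=
  Finset.univ.filter (· ∈ e)

/-- A Hamiltonian is geometrically `k`-local w.r.t. the graph `G`: it is a sum
of Hermitian terms, each supported on a connected subset of `G` with at most
`k` vertices. -/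
def GeomLocal {n : ℕ} (G : SimpleGraph (Fin n)) (k : ℕ) (H : Op n) : Prop :=
  ∃ (m : ℕ) (h : Fin m → Op n) (S : Fin m → Set (Fin n)),
    H = ∑ j, h j ∧
    ∀ j, (h j).IsHermitian ∧ SupportedOn (S j) (h j) ∧
      (S j).ncard ≤ k ∧ (G.induce (S j)).Preconnected

/-- The ball of radius `k` around a set of vertices, in the graph metric. -/
def Ball {n : ℕ} (G : SimpleGraph (Fin n)) (X : Set (Fin n)) (k : ℕ) :
    Set (Fin n) :=
  {v | ∃ u ∈ X, ∃ w : G.Walk u v, w.length ≤ k}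

/- Pauli matrices and the Wauli bases. -/
def PX : Matrix (Fin 2) (Fin 2) ℂ := !![0, 1; 1, 0]
def PY : Matrix (Fin 2) (Fin 2) ℂ := !![0, -Complex.I; Complex.I, 0]
def PZ : Matrix (Fin 2) (Fin 2) ℂ := !![1, 0; 0, -1]

/-- `W = (1/2)(1 + λ Z)`. -/
noncomputable def Wmat (l : ℝ) : Matrix (Fin 2) (Fin 2) ℂ :=
  (2⁻¹ : ℂ) • (1 + (l : ℂ) • PZ)

/-- Single-qubit Wauli basis `{W, X/2, Y/2, Z/2}`. -/
noncomputable def wauli (l : ℝ) : Fin 4 → Matrix (Fin 2) (Fin 2) ℂ :=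
  ![Wmat l, (2⁻¹ : ℂ) • PX, (2⁻¹ : ℂ) • PY, (2⁻¹ : ℂ) • PZ]

/-- Single-qubit dual Wauli basis `{1, X, Y, Z - λ·1}`. -/
noncomputable def dualWauli (l : ℝ) : Fin 4 → Matrix (Fin 2) (Fin 2) ℂ :=
  ![1, PX, PY, PZ - (l : ℂ) • 1]

/-- The `n`-qubit Wauli basis element `Q_α` (tensor product of the `Q_{α_i}`). -/
noncomputable def Qmat {n : ℕ} (lam : Fin n → ℝ) (α : Fin n → Fin 4) : Op n :=
  Matrix.of fun x y => ∏ i, wauli (lam i) (α i) (x i) (y i)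

/-- The `n`-qubit dual Wauli basis element `Q̃_α`. -/
noncomputable def Qdual {n : ℕ} (lam : Fin n → ℝ) (α : Fin n → Fin 4) : Op n :=
  Matrix.of fun x y => ∏ i, dualWauli (lam i) (α i) (x i) (y i)

/-- The support of a Wauli string. -/
def suppStr {n : ℕ} (α : Fin n → Fin 4) : Finset (Fin n) :=
  Finset.univ.filter (fun i => α i ≠ 0)

/-- The coefficient `c_α = Tr(Q_α O)` of the expansion `O = ∑_α c_α Q̃_α`
in the dual Wauli basis. -/
noncomputable def QCoeff {n : ℕ} (lam : Fin n → ℝ) (O : Op n)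
    (α : Fin n → Fin 4) : ℂ :=
  (Qmat lam α * O).trace

/-- The `Q1` norm: the `ℓ¹` norm of the dual-Wauli coefficient vector. -/
noncomputable def Q1Norm {n : ℕ} (lam : Fin n → ℝ) (O : Op n) : ℝ :=
  ∑ α : Fin n → Fin 4, ‖QCoeff lam O α‖

/-- The subspace `S_k`: the span of the dual Wauli operators `Q̃_α` with
`|α| ≤ k`. -/
def Sk {n : ℕ} (lam : Fin n → ℝ) (k : ℕ) : Submodule ℂ (Op n) :=
  Submodule.span ℂ {Q | ∃ α : Fin n → Fin 4, (suppStr α).card ≤ k ∧ Q = Qdual lam α}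

/-- The trace norm `Tr √(O†O)` of a matrix. -/
noncomputable def traceNorm {m : Type*} [Fintype m] [DecidableEq m]
    (M : Matrix m m ℂ) : ℝ :=
  (((Matrix.posSemidef_conjTranspose_mul_self M).1.eigenvectorUnitary.1 *
      Matrix.diagonal (((↑) : ℝ → ℂ) ∘ Real.sqrt ∘ (Matrix.posSemidef_conjTranspose_mul_self M).1.eigenvalues) *
      (star (Matrix.posSemidef_conjTranspose_mul_self M).1.eigenvectorUnitary : Matrix m m ℂ)).trace).re

/-! Each coefficient is a trace `c_α = ∑_{x,y} (Q_α)_{xy} O_{yx}`. The entries of `O` are bounded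
by `‖O‖_∞`, and for `0 ≤ λ ≤ 1` the entries of every `Q_α` have absolute sum `1`, so
`|c_α| ≤ ‖O‖_∞`. If `α_j ≠ 0` at a qubit `j` outside the support of `O`, then `O` acts as the
identity on `j` while `Q_{α_j}` is traceless, so `c_α = 0`. Hence at most `4^ℓ` coefficients
survive. -/

open Finset

lemma norm_apply_le_opNorm {m : Type*} [Fintype m] [DecidableEq m] (M : Matrix m m ℂ)
    (x y : m) : ‖M x y‖ ≤ opNorm M := by
  set T := Matrix.toEuclideanCLM (𝕜 := ℂ) M
  have hcol : T (EuclideanSpace.single y 1) x = M x y := by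
    simp [T, EuclideanSpace.single, Matrix.mulVec_single]
  calc ‖M x y‖ = ‖T (EuclideanSpace.single y 1) x‖ := by rw [hcol]
    _ ≤ ‖T (EuclideanSpace.single y 1)‖ := PiLp.norm_apply_le _ _
    _ ≤ ‖T‖ * ‖EuclideanSpace.single y (1 : ℂ)‖ := T.le_opNorm _
    _ = opNorm M := by simp [opNorm, T]

lemma norm_trace_mul_le {m R : Type*} [Fintype m] [NormedRing R] (A B : Matrix m m R) {C : ℝ}
    (hB : ∀ x y, ‖B x y‖ ≤ C) : ‖(A * B).trace‖ ≤ (∑ x, ∑ y, ‖A x y‖) * C := by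
  simp only [Matrix.trace, Matrix.diag, Matrix.mul_apply, sum_mul]
  refine (norm_sum_le _ _).trans (sum_le_sum fun x _ => (norm_sum_le _ _).trans ?_)
  exact sum_le_sum fun y _ =>
    (norm_mul_le _ _).trans (mul_le_mul_of_nonneg_left (hB y x) (norm_nonneg _))

lemma Fintype.prod_sum_sum {ι κ R : Type*} [Fintype ι] [DecidableEq ι] [Fintype κ]
    [CommSemiring R] (g : ι → κ → κ → R) :
    ∏ i, ∑ a, ∑ b, g i a b = ∑ x : ι → κ, ∑ y : ι → κ, ∏ i, g i (x i) (y i) := by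
  simp only [Fintype.prod_sum]

lemma sum_norm_wauli_apply {l : ℝ} (hl0 : 0 ≤ l) (hl1 : l ≤ 1) (k : Fin 4) :
    ∑ a, ∑ b, ‖wauli l k a b‖ = 1 := by
  fin_cases k
  · have h₁ : (2⁻¹ + 2⁻¹ * l : ℂ) = ((1 + l) / 2 : ℝ) := by push_cast; ring
    have h₂ : (2⁻¹ - 2⁻¹ * l : ℂ) = ((1 - l) / 2 : ℝ) := by push_cast; ring
    simp [wauli, Wmat, PZ, Fin.sum_univ_two, ← sub_eq_add_neg]
    rw [h₁, h₂, Complex.norm_of_nonneg (by linarith), Complex.norm_of_nonneg (by linarith)]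
    ring
  all_goals simp [wauli, PX, PY, PZ, Fin.sum_univ_two]; norm_num

lemma sum_norm_Qmat_apply {n : ℕ} {lam : Fin n → ℝ} (hlam : ∀ i, 0 ≤ lam i ∧ lam i ≤ 1)
    (α : Fin n → Fin 4) : ∑ x, ∑ y, ‖Qmat lam α x y‖ = 1 := by
  simp only [Qmat, Matrix.of_apply, norm_prod]
  rw [← Fintype.prod_sum_sum fun i a b => ‖wauli (lam i) (α i) a b‖]
  exact Fintype.prod_eq_one _ fun i => sum_norm_wauli_apply (hlam i).1 (hlam i).2 (α i)

lemma norm_QCoeff_le {n : ℕ} {lam : Fin n → ℝ} (hlam : ∀ i, 0 ≤ lam i ∧ lam i ≤ 1)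
    (O : Op n) (α : Fin n → Fin 4) : ‖QCoeff lam O α‖ ≤ opNorm O := by
  simpa [QCoeff, sum_norm_Qmat_apply hlam] using
    norm_trace_mul_le (Qmat lam α) O (norm_apply_le_opNorm O)

lemma SupportedOn.apply_add_add {n : ℕ} {S : Set (Fin n)} {O : Op n} (hS : SupportedOn S O)
    {v : Idx n} (hv : ∀ i ∈ S, v i = 0) (x y : Idx n) : O (x + v) (y + v) = O x y := by
  by_cases hxy : ∃ i ∉ S, x i ≠ y i
  · obtain ⟨i, hi, hne⟩ := hxy
    rw [hS.1 x y ⟨i, hi, hne⟩]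
    exact hS.1 _ _ ⟨i, hi, fun h => hne (add_right_cancel h)⟩
  · push Not at hxy
    refine hS.2 _ _ _ _ (fun i hi => ?_) (fun i hi => ?_) (fun i hi => ?_) hxy
    · simp [hv i hi]
    · simp [hv i hi]
    · simp [hxy i hi]

lemma wauli_apply_add_one_add_one {l : ℝ} {k : Fin 4} (hk : k ≠ 0) (a : Fin 2) :
    wauli l k (a + 1) (a + 1) = -wauli l k a a := by
  fin_cases k
  · exact absurd rfl hk
  all_goals fin_cases a <;> simp [wauli, PX, PY, PZ]

lemma Qmat_add_single_add_single {n : ℕ} (lam : Fin n → ℝ) {α : Fin n → Fin 4} {j : Fin n}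
    (hα : α j ≠ 0) {x y : Idx n} (hxy : x j = y j) :
    Qmat lam α (x + Pi.single j 1) (y + Pi.single j 1) = -Qmat lam α x y := by
  simp only [Qmat, Matrix.of_apply, Fintype.prod_eq_mul_prod_compl j, Pi.add_apply,
    Pi.single_eq_same, hxy, wauli_apply_add_one_add_one hα, neg_mul]
  congr 2
  refine prod_congr rfl fun i hi => ?_
  rw [Pi.single_eq_of_ne (by simpa using hi), add_zero, add_zero]

lemma QCoeff_eq_zero_of_supportedOn {n : ℕ} (lam : Fin n → ℝ) {S : Set (Fin n)} {O : Op n}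
    (hS : SupportedOn S O) {α : Fin n → Fin 4} {j : Fin n} (hj : j ∉ S) (hα : α j ≠ 0) :
    QCoeff lam O α = 0 := by
  set e : Idx n := Pi.single j 1
  have he : ∀ i ∈ S, e i = 0 := fun i hi => Pi.single_eq_of_ne (by rintro rfl; exact hj hi) _
  have hee : e + e = 0 := by simp [e, ← Pi.single_add]
  let F : Idx n × Idx n → ℂ := fun p => Qmat lam α p.1 p.2 * O p.2 p.1
  -- flipping qubit `j` in both indices fixes `O` and negates the diagonal of `Q_{α_j}`
  have hF : ∀ p : Idx n × Idx n, F p + F (p.1 + e, p.2 + e) = 0 := by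
    rintro ⟨x, y⟩
    simp only [F, hS.apply_add_add he]
    by_cases hxy : x j = y j
    · rw [Qmat_add_single_add_single lam hα hxy]; ring
    · rw [hS.1 y x ⟨j, hj, Ne.symm hxy⟩]; ring
  have htrace : QCoeff lam O α = ∑ p, F p := by
    simp [QCoeff, Matrix.trace, Matrix.mul_apply, F, Fintype.sum_prod_type]
  rw [htrace]
  refine sum_ninvolution (fun p => (p.1 + e, p.2 + e)) hF (fun p _ h => ?_) (fun _ => mem_univ _)
    (fun p => by simp [add_assoc, hee])
  have := congrArg (fun p : Idx n × Idx n => p.1 j) h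
  simp [e] at this

/-- for an operator supported on `ℓ` qubits,
`‖O‖_{Q1} ≤ 4^ℓ ‖O‖_∞`. -/
theorem Q1Norm_le_pow_mul_opNorm {n : ℕ} (lam : Fin n → ℝ)
    (hlam : ∀ i, 0 ≤ lam i ∧ lam i < 1)
    (O : Op n) (S : Set (Fin n)) (l : ℕ)
    (hS : SupportedOn S O) (hcard : S.ncard = l) :
    Q1Norm lam O ≤ 4 ^ l * opNorm O := by
  lift S to Finset (Fin n) using S.toFinite
  set A := Fintype.piFinset fun i => if i ∈ S then univ else {(0 : Fin 4)}
  have hA : #A = 4 ^ l := by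
    simp [A, apply_ite card, ← hcard]
  have hQ1 : Q1Norm lam O = ∑ α ∈ A, ‖QCoeff lam O α‖ := by
    refine (sum_subset (subset_univ A) fun α _ hα => ?_).symm
    obtain ⟨j, hj⟩ : ∃ j, α j ∉ if j ∈ S then univ else {0} := by simpa [A] using hα
    split_ifs at hj with hjS
    · exact absurd (mem_univ _) hj
    · rw [QCoeff_eq_zero_of_supportedOn lam hS (by simpa using hjS) (by simpa using hj), norm_zero]
  calc Q1Norm lam O = ∑ α ∈ A, ‖QCoeff lam O α‖ := hQ1
    _ ≤ ∑ _α ∈ A, opNorm O :=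
      sum_le_sum fun α _ => norm_QCoeff_le (fun i => ⟨(hlam i).1, (hlam i).2.le⟩) O α
    _ = 4 ^ l * opNorm O := by rw [sum_const, hA, nsmul_eq_mul]; norm_num

end

end SSP
end

section
/- Fix λ_i ∈ [0,1) for each of n qubits and let λ = max_i λ_i. Let E be a quantum channel acting only on a set of k qubits (within the n-qubit system), and let E* be its Hilbert–Schmidt adjoint. Then for any n-qubit operator O, ‖E*(O)‖_{Q1} ≤ 4^k (1+λ)^k · ‖O‖_{Q1} ≤ 2^{3k} · ‖O‖_{Q1}. -/
namespace SSP

noncomputable section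

open Matrix
open scoped ComplexOrder

/-!
Expanding `O = ∑_β c_β Q̃_β` reduces the bound to `‖E*(Q̃_β)‖_{Q1} ≤ 4^k (1+λ)^k` for every `β`,
where `E*(Q̃_β) = ∑_j F_j† Q̃_β F_j`. Its coefficient on `Q̃_α` is `Tr(Q_α E*(Q̃_β))`.

If `α_i ≠ β_i` at a qubit `i ∉ S`, this coefficient vanishes: flipping bit `i` in every matrix
index of the trace leaves the `F_j`, which act trivially on `i`, unchanged and negates the product
of the single-qubit factors at `i`. So at most `4^k` strings `α` contribute.

For the others, `Q_b` and `Q̃_b` have a common single-qubit eigenbasis `U_b`, with eigenvalues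
`d_b` and `d̃_b`. Writing `N_j = K_β† F_j K_α` in the product bases `K_α = ⨂ U_{α_i}`, the
coefficient becomes `∑_{x,y} d_α(x) d̃_β(y) T(x,y)`, where `T(x,y) = ∑_j |N_j(y,x)|²` is
row-stochastic (because `∑ F_j† F_j = 1`) and vanishes unless `x = y` outside `S`. The
single-qubit facts `∑ |d_b| = 1`, `∑ |d_b| |d̃_b| = 1` and `|d̃_b| ≤ 1 + λ` then bound it by
`(1+λ)^k`.
-/

open ComplexConjugate

lemma sqrt_two_sq : ((√2 : ℝ) : ℂ) ^ 2 = 2 := by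
  rw [← Complex.ofReal_pow, Real.sq_sqrt zero_le_two, Complex.ofReal_ofNat]

def wauliEigvecs : Fin 4 → Matrix (Fin 2) (Fin 2) ℂ :=
  ![1, ((√2 : ℝ) : ℂ)⁻¹ • !![1, 1; 1, -1], ((√2 : ℝ) : ℂ)⁻¹ • !![1, 1; Complex.I, -Complex.I], 1]

def wauliEigvals (l : ℝ) : Fin 4 → Fin 2 → ℝ :=
  ![![(1 + l) / 2, (1 - l) / 2], ![1 / 2, -(1 / 2)], ![1 / 2, -(1 / 2)], ![1 / 2, -(1 / 2)]]

def dualWauliEigvals (l : ℝ) : Fin 4 → Fin 2 → ℝ :=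
  ![![1, 1], ![1, -1], ![1, -1], ![1 - l, -1 - l]]

lemma wauliEigvecs_mul_conjTranspose (b : Fin 4) : wauliEigvecs b * (wauliEigvecs b)ᴴ = 1 := by
  ext s t
  simp only [mul_apply, Fin.sum_univ_two, conjTranspose_apply, one_apply]
  fin_cases b <;> fin_cases s <;> fin_cases t <;>
    simp only [wauliEigvecs, Fin.zero_eta, Fin.mk_one, Fin.reduceFinMk, cons_val_zero,
      cons_val_one, cons_val_two, cons_val_three, Matrix.smul_apply, of_apply, smul_eq_mul] <;>
    simp <;> ring_nf <;> simp [sqrt_two_sq]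

lemma wauliEigvecs_conjTranspose_mul (b : Fin 4) : (wauliEigvecs b)ᴴ * wauliEigvecs b = 1 := by
  ext s t
  simp only [mul_apply, Fin.sum_univ_two, conjTranspose_apply, one_apply]
  fin_cases b <;> fin_cases s <;> fin_cases t <;>
    simp only [wauliEigvecs, Fin.zero_eta, Fin.mk_one, Fin.reduceFinMk, cons_val_zero,
      cons_val_one, cons_val_two, cons_val_three, Matrix.smul_apply, of_apply, smul_eq_mul] <;>
    simp <;> ring_nf <;> simp [sqrt_two_sq] <;> norm_num

lemma wauli_eq_conj_diagonal (l : ℝ) (b : Fin 4) :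
    wauli l b =
      wauliEigvecs b * diagonal (fun p => (wauliEigvals l b p : ℂ)) * (wauliEigvecs b)ᴴ := by
  ext s t
  simp only [mul_apply, Fin.sum_univ_two, conjTranspose_apply, diagonal_apply]
  fin_cases b <;> fin_cases s <;> fin_cases t <;>
    simp only [wauli, Wmat, PX, PY, PZ, wauliEigvecs, wauliEigvals, Fin.zero_eta, Fin.mk_one,
      Fin.reduceFinMk, cons_val_zero, cons_val_one, cons_val_two, cons_val_three, Matrix.smul_apply,
      of_apply, smul_eq_mul] <;>
    simp <;> ring_nf <;> norm_num [sqrt_two_sq]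

lemma dualWauli_eq_conj_diagonal (l : ℝ) (b : Fin 4) :
    dualWauli l b =
      wauliEigvecs b * diagonal (fun p => (dualWauliEigvals l b p : ℂ)) * (wauliEigvecs b)ᴴ := by
  ext s t
  simp only [mul_apply, Fin.sum_univ_two, conjTranspose_apply, diagonal_apply]
  fin_cases b <;> fin_cases s <;> fin_cases t <;>
    simp only [dualWauli, PX, PY, PZ, wauliEigvecs, dualWauliEigvals, Fin.zero_eta, Fin.mk_one,
      Fin.reduceFinMk, cons_val_zero, cons_val_one, cons_val_two, cons_val_three, Matrix.smul_apply,
      of_apply, smul_eq_mul] <;>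
    simp <;> ring_nf <;> norm_num [sqrt_two_sq, mul_comm, mul_left_comm]

lemma sum_wauli_mul_dualWauli (l : ℝ) (s t p q : Fin 2) :
    ∑ g, wauli l g s t * dualWauli l g p q = if t = p ∧ s = q then 1 else 0 := by
  simp only [Fin.sum_univ_four]
  fin_cases s <;> fin_cases t <;> fin_cases p <;> fin_cases q <;>
    simp only [wauli, dualWauli, Wmat, PX, PY, PZ, Fin.zero_eta, Fin.mk_one, cons_val_zero,
      cons_val_one, cons_val_two, cons_val_three, Matrix.smul_apply, of_apply, smul_eq_mul] <;>
    simp <;> ring_nf <;> norm_num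

lemma wauli_mul_dualWauli_add_one (l : ℝ) {a b : Fin 4} (hab : a ≠ b) (s t : Fin 2) :
    wauli l a (s + 1) (t + 1) * dualWauli l b (t + 1) (s + 1) =
      -(wauli l a s t * dualWauli l b t s) := by
  fin_cases a <;> fin_cases b <;> (try exact absurd rfl hab) <;> fin_cases s <;> fin_cases t <;>
    simp only [wauli, dualWauli, Wmat, PX, PY, PZ, Fin.zero_eta, Fin.mk_one, Fin.reduceFinMk,
      Fin.reduceAdd, cons_val_zero, cons_val_one, cons_val_two, cons_val_three, Matrix.smul_apply,
      of_apply, smul_eq_mul] <;>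
    simp <;> ring

lemma conj_wauliEigvecs_mul_add_one (b : Fin 4) {x y : Fin 2} (hxy : x ≠ y) (s : Fin 2) :
    conj (wauliEigvecs b (s + 1) y) * wauliEigvecs b (s + 1) x =
      -(conj (wauliEigvecs b s y) * wauliEigvecs b s x) := by
  fin_cases b <;> fin_cases x <;> fin_cases y <;> (try exact absurd rfl hxy) <;> fin_cases s <;>
    simp only [wauliEigvecs, Fin.zero_eta, Fin.mk_one, Fin.reduceFinMk, Fin.reduceAdd,
      cons_val_zero, cons_val_one, cons_val_two, cons_val_three, Matrix.smul_apply, of_apply,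
      smul_eq_mul] <;>
    simp <;> ring_nf <;> simp [Complex.I_sq]

lemma sum_abs_wauliEigvals {l : ℝ} (h0 : 0 ≤ l) (h1 : l ≤ 1) (b : Fin 4) :
    ∑ p, |wauliEigvals l b p| = 1 := by
  fin_cases b <;>
    norm_num [wauliEigvals, Fin.sum_univ_two, abs_of_nonneg (by linarith : (0 : ℝ) ≤ (1 + l) / 2),
      abs_of_nonneg (by linarith : (0 : ℝ) ≤ (1 - l) / 2)]
  ring

lemma sum_abs_wauliEigvals_mul_abs_dualWauliEigvals {l : ℝ} (h0 : 0 ≤ l) (h1 : l ≤ 1)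
    (b : Fin 4) : ∑ p, |wauliEigvals l b p| * |dualWauliEigvals l b p| = 1 := by
  fin_cases b <;>
    norm_num [wauliEigvals, dualWauliEigvals, Fin.sum_univ_two,
      abs_of_nonneg (by linarith : (0 : ℝ) ≤ (1 + l) / 2),
      abs_of_nonneg (by linarith : (0 : ℝ) ≤ (1 - l) / 2), abs_of_nonneg (by linarith : 0 ≤ 1 - l),
      abs_of_nonpos (by linarith : -1 - l ≤ 0)] <;> ring

lemma abs_dualWauliEigvals_le {l : ℝ} (h0 : 0 ≤ l) (b : Fin 4) (p : Fin 2) :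
    |dualWauliEigvals l b p| ≤ 1 + l := by
  fin_cases b <;> fin_cases p <;> simp [dualWauliEigvals, abs_le] <;> (try constructor) <;> linarith

section PiKron

variable {ι κ R : Type*} [Fintype ι] [CommSemiring R]

def piKron (A : ι → Matrix κ κ R) : Matrix (ι → κ) (ι → κ) R :=
  of fun x y => ∏ i, A i (x i) (y i)

lemma piKron_apply (A : ι → Matrix κ κ R) (x y : ι → κ) :
    piKron A x y = ∏ i, A i (x i) (y i) := rfl

lemma piKron_mul [DecidableEq ι] [Fintype κ] (A B : ι → Matrix κ κ R) :
    piKron A * piKron B = piKron fun i => A i * B i := by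
  ext x y
  simp only [mul_apply, piKron_apply, Fintype.prod_sum, Finset.prod_mul_distrib]

lemma piKron_diagonal [DecidableEq κ] (d : ι → κ → R) :
    piKron (fun i => diagonal (d i)) = diagonal fun x => ∏ i, d i (x i) := by
  ext x y
  simp only [piKron_apply, diagonal_apply, Fintype.prod_ite_zero, funext_iff]

lemma piKron_one [DecidableEq κ] : piKron (fun _ : ι => (1 : Matrix κ κ R)) = 1 := by
  simpa using piKron_diagonal (ι := ι) fun _ _ => (1 : R)

lemma piKron_conjTranspose [StarRing R] (A : ι → Matrix κ κ R) :
    (piKron A)ᴴ = piKron fun i => (A i)ᴴ := by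
  ext x y
  simp only [conjTranspose_apply, piKron_apply, star_prod]

end PiKron

variable {n : ℕ}

lemma Qmat_eq_piKron (lam : Fin n → ℝ) (α : Fin n → Fin 4) :
    Qmat lam α = piKron fun i => wauli (lam i) (α i) := rfl

lemma Qdual_eq_piKron (lam : Fin n → ℝ) (α : Fin n → Fin 4) :
    Qdual lam α = piKron fun i => dualWauli (lam i) (α i) := rfl

def wauliFrame (α : Fin n → Fin 4) : Op n := piKron fun i => wauliEigvecs (α i)

def wauliSpectrum (lam : Fin n → ℝ) (α : Fin n → Fin 4) (x : Idx n) : ℝ :=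
  ∏ i, wauliEigvals (lam i) (α i) (x i)

def dualWauliSpectrum (lam : Fin n → ℝ) (α : Fin n → Fin 4) (x : Idx n) : ℝ :=
  ∏ i, dualWauliEigvals (lam i) (α i) (x i)

lemma piKron_conj_diagonal (U : Fin n → Matrix (Fin 2) (Fin 2) ℂ) (d : Fin n → Fin 2 → ℝ) :
    (piKron fun i => U i * diagonal (fun p => (d i p : ℂ)) * (U i)ᴴ) =
      piKron U * diagonal (fun x => ((∏ i, d i (x i) : ℝ) : ℂ)) * (piKron U)ᴴ := by
  have hd := piKron_diagonal fun i p => (d i p : ℂ)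
  simp only [Complex.ofReal_prod]
  rw [← hd, piKron_conjTranspose, piKron_mul, piKron_mul]

lemma Qmat_eq_conj_diagonal (lam : Fin n → ℝ) (α : Fin n → Fin 4) :
    Qmat lam α = wauliFrame α * diagonal (fun x => (wauliSpectrum lam α x : ℂ)) *
      (wauliFrame α)ᴴ := by
  simp only [Qmat_eq_piKron, wauli_eq_conj_diagonal, piKron_conj_diagonal, wauliFrame,
    wauliSpectrum]

lemma Qdual_eq_conj_diagonal (lam : Fin n → ℝ) (α : Fin n → Fin 4) :
    Qdual lam α = wauliFrame α * diagonal (fun x => (dualWauliSpectrum lam α x : ℂ)) *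
      (wauliFrame α)ᴴ := by
  simp only [Qdual_eq_piKron, dualWauli_eq_conj_diagonal, piKron_conj_diagonal, wauliFrame,
    dualWauliSpectrum]

lemma wauliFrame_mul_conjTranspose (α : Fin n → Fin 4) : wauliFrame α * (wauliFrame α)ᴴ = 1 := by
  simp only [wauliFrame, piKron_conjTranspose, piKron_mul, wauliEigvecs_mul_conjTranspose,
    piKron_one]

lemma wauliFrame_conjTranspose_mul (α : Fin n → Fin 4) : (wauliFrame α)ᴴ * wauliFrame α = 1 := by
  simp only [wauliFrame, piKron_conjTranspose, piKron_mul, wauliEigvecs_conjTranspose_mul,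
    piKron_one]

lemma sum_Qmat_mul_Qdual (lam : Fin n → ℝ) (a b c d : Idx n) :
    ∑ β, Qmat lam β c d * Qdual lam β a b = if d = a ∧ c = b then 1 else 0 := by
  simp only [Qmat_eq_piKron, Qdual_eq_piKron, piKron_apply, ← Finset.prod_mul_distrib]
  rw [← Fintype.prod_sum fun i g => wauli (lam i) g (c i) (d i) * dualWauli (lam i) g (a i) (b i)]
  simp only [sum_wauli_mul_dualWauli, Fintype.prod_boole, forall_and, ← funext_iff]

lemma sum_QCoeff_smul_Qdual (lam : Fin n → ℝ) (O : Op n) :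
    ∑ β, QCoeff lam O β • Qdual lam β = O := by
  ext a b
  calc (∑ β, QCoeff lam O β • Qdual lam β) a b
      = ∑ c, ∑ d, O d c * ∑ β, Qmat lam β c d * Qdual lam β a b := by
        simp only [Matrix.sum_apply, Matrix.smul_apply, smul_eq_mul, QCoeff, trace, diag,
          mul_apply, Finset.sum_mul, Finset.mul_sum]
        rw [Finset.sum_comm]
        refine Finset.sum_congr rfl fun c _ => ?_
        rw [Finset.sum_comm]
        exact Finset.sum_congr rfl fun d _ => Finset.sum_congr rfl fun β _ => by ring
    _ = O a b := by simp [sum_Qmat_mul_Qdual, ite_and]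

lemma QCoeff_map (lam : Fin n → ℝ) (Φ : SOp n) (O : Op n) (α : Fin n → Fin 4) :
    QCoeff lam (Φ O) α = ∑ β, QCoeff lam O β * QCoeff lam (Φ (Qdual lam β)) α := by
  conv_lhs => rw [← sum_QCoeff_smul_Qdual lam O]
  simp only [map_sum, map_smul, QCoeff, Matrix.mul_sum, trace_sum, Matrix.mul_smul, trace_smul,
    smul_eq_mul]

lemma Q1Norm_map_le (lam : Fin n → ℝ) (Φ : SOp n) {C : ℝ}
    (hC : ∀ β, Q1Norm lam (Φ (Qdual lam β)) ≤ C) (O : Op n) :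
    Q1Norm lam (Φ O) ≤ C * Q1Norm lam O :=
  calc Q1Norm lam (Φ O)
      ≤ ∑ α, ∑ β, ‖QCoeff lam O β‖ * ‖QCoeff lam (Φ (Qdual lam β)) α‖ := by
        refine Finset.sum_le_sum fun α _ => ?_
        rw [QCoeff_map]
        exact (norm_sum_le _ _).trans_eq (by simp only [norm_mul])
    _ = ∑ β, ‖QCoeff lam O β‖ * Q1Norm lam (Φ (Qdual lam β)) := by
        rw [Finset.sum_comm]; simp only [Q1Norm, Finset.mul_sum]
    _ ≤ ∑ β, ‖QCoeff lam O β‖ * C :=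
        Finset.sum_le_sum fun β _ => mul_le_mul_of_nonneg_left (hC β) (norm_nonneg _)
    _ = C * Q1Norm lam O := by rw [← Finset.sum_mul, mul_comm, Q1Norm]

lemma IsHSAdjoint.apply_eq_sum {E Estar : SOp n} {m : ℕ} {F : Fin m → Op n}
    (hE : ∀ ρ, E ρ = ∑ j, F j * ρ * (F j)ᴴ) (hadj : IsHSAdjoint E Estar) (A : Op n) :
    Estar A = ∑ j, (F j)ᴴ * A * F j := by
  refine conjTranspose_injective (ext_iff_trace_mul_right.mpr fun B => ?_)
  rw [hadj, hE, conjTranspose_sum]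
  simp only [Matrix.mul_sum, Matrix.sum_mul, trace_sum, conjTranspose_mul,
    conjTranspose_conjTranspose]
  refine Finset.sum_congr rfl fun j _ => ?_
  rw [← Matrix.mul_assoc, ← Matrix.mul_assoc, trace_mul_cycle, Matrix.mul_assoc]

lemma sum_eq_zero_of_add_right_eq_neg {G M : Type*} [AddGroup G] [Fintype G]
    [AddCommGroup M] [IsAddTorsionFree M] (g : G) {f : G → M} (hf : ∀ x, f (x + g) = -f x) :
    ∑ x, f x = 0 := by
  have h := Equiv.sum_comp (Equiv.addRight g) f
  simp only [Equiv.coe_addRight, hf, Finset.sum_neg_distrib] at h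
  exact self_eq_neg.mp h.symm

lemma prod_eq_neg_of_eq_of_ne {ι R : Type*} [Fintype ι] [DecidableEq ι] [CommRing R]
    {f g : ι → R} (i : ι) (hi : f i = -g i) (h : ∀ j ≠ i, f j = g j) :
    ∏ j, f j = -∏ j, g j := by
  rw [← Finset.mul_prod_erase _ f (Finset.mem_univ i), ← Finset.mul_prod_erase _ g
    (Finset.mem_univ i), hi, neg_mul,
    Finset.prod_congr rfl fun j hj => h j (Finset.ne_of_mem_erase hj)]

lemma SupportedOn.apply_add_single {S : Set (Fin n)} {F : Op n} (hF : SupportedOn S F)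
    {i : Fin n} (hi : i ∉ S) (c d : Idx n) :
    F (c + Pi.single i 1) (d + Pi.single i 1) = F c d := by
  by_cases hcd : ∃ j ∉ S, c j ≠ d j
  · obtain ⟨j, hj, hne⟩ := hcd
    rw [hF.1 c d ⟨j, hj, hne⟩, hF.1 _ _ ⟨j, hj, by simpa using hne⟩]
  · simp only [not_exists, not_and, not_not] at hcd
    have hS : ∀ x : Idx n, ∀ j ∈ S, x j = (x + Pi.single i 1 : Idx n) j := fun x j hj => by
      simp [ne_of_mem_of_not_mem hj hi]
    exact (hF.2 c d _ _ (hS c) (hS d) hcd fun j hj => by simp [hcd j hj]).symm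

lemma SupportedOn.apply_eq_of_ne_zero {S : Set (Fin n)} {F : Op n} (hF : SupportedOn S F)
    {c d : Idx n} (hcd : F c d ≠ 0) {i : Fin n} (hi : i ∉ S) : c i = d i := by
  by_contra h
  exact hcd (hF.1 c d ⟨i, hi, h⟩)

lemma QCoeff_conj_Qdual_eq_sum_entries (lam : Fin n → ℝ) (F : Op n) (α β : Fin n → Fin 4) :
    QCoeff lam (Fᴴ * Qdual lam β * F) α =
      ∑ p : (Idx n × Idx n) × (Idx n × Idx n), Qmat lam α p.1.1 p.1.2 * Qdual lam β p.2.1 p.2.2 *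
        (conj (F p.2.1 p.1.2) * F p.2.2 p.1.1) := by
  simp only [QCoeff, trace, diag, mul_apply, conjTranspose_apply, Fintype.sum_prod_type,
    Finset.mul_sum, Finset.sum_mul]
  refine Finset.sum_congr rfl fun a _ => Finset.sum_congr rfl fun b _ => ?_
  rw [Finset.sum_comm]
  refine Finset.sum_congr rfl fun c _ => Finset.sum_congr rfl fun d _ => ?_
  rw [starRingEnd_apply]
  ring

lemma QCoeff_conj_Qdual_eq_zero (lam : Fin n → ℝ) {S : Set (Fin n)} {F : Op n}
    (hF : SupportedOn S F) {α β : Fin n → Fin 4} {i : Fin n} (hi : i ∉ S) (hαβ : α i ≠ β i) :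
    QCoeff lam (Fᴴ * Qdual lam β * F) α = 0 := by
  rw [QCoeff_conj_Qdual_eq_sum_entries]
  refine sum_eq_zero_of_add_right_eq_neg
    ((Pi.single i 1, Pi.single i 1), (Pi.single i 1, Pi.single i 1)) fun ⟨⟨a, b⟩, ⟨c, d⟩⟩ => ?_
  simp only [Prod.mk_add_mk, hF.apply_add_single hi]
  rcases eq_or_ne (F c b) 0 with hcb | hcb
  · simp [hcb]
  rcases eq_or_ne (F d a) 0 with hda | hda
  · simp [hda]
  have hcb := hF.apply_eq_of_ne_zero hcb hi
  have hda := hF.apply_eq_of_ne_zero hda hi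
  suffices Qmat lam α (a + Pi.single i 1) (b + Pi.single i 1) *
      Qdual lam β (c + Pi.single i 1) (d + Pi.single i 1) =
      -(Qmat lam α a b * Qdual lam β c d) by rw [this, neg_mul]
  simp only [Qmat_eq_piKron, Qdual_eq_piKron, piKron_apply, ← Finset.prod_mul_distrib]
  refine prod_eq_neg_of_eq_of_ne i ?_ fun j hj => ?_
  · simpa [hcb, hda] using wauli_mul_dualWauli_add_one (lam i) hαβ (a i) (b i)
  · simp [Pi.single_eq_of_ne hj]

def framedKraus (F : Op n) (α β : Fin n → Fin 4) : Op n := (wauliFrame β)ᴴ * F * wauliFrame α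

lemma framedKraus_apply (F : Op n) (α β : Fin n → Fin 4) (y x : Idx n) :
    framedKraus F α β y x = ∑ p : Idx n × Idx n,
      conj (wauliFrame β p.1 y) * wauliFrame α p.2 x * F p.1 p.2 := by
  simp only [framedKraus, mul_apply, conjTranspose_apply, Fintype.sum_prod_type, Finset.sum_mul]
  rw [Finset.sum_comm]
  exact Finset.sum_congr rfl fun c _ => Finset.sum_congr rfl fun d _ => by
    rw [starRingEnd_apply]; ring

lemma framedKraus_apply_eq_zero {S : Set (Fin n)} {F : Op n} (hF : SupportedOn S F)
    {α β : Fin n → Fin 4} (hαβ : ∀ i ∉ S, α i = β i) {i : Fin n} (hi : i ∉ S) {x y : Idx n}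
    (hxy : x i ≠ y i) : framedKraus F α β y x = 0 := by
  rw [framedKraus_apply]
  refine sum_eq_zero_of_add_right_eq_neg (Pi.single i 1, Pi.single i 1)
    fun ⟨c, d⟩ => ?_
  simp only [Prod.mk_add_mk, hF.apply_add_single hi]
  rcases eq_or_ne (F c d) 0 with hcd | hcd
  · simp [hcd]
  have hcd := hF.apply_eq_of_ne_zero hcd hi
  suffices conj (wauliFrame β (c + Pi.single i 1) y) * wauliFrame α (d + Pi.single i 1) x =
      -(conj (wauliFrame β c y) * wauliFrame α d x) by rw [this, neg_mul]
  simp only [wauliFrame, piKron_apply, map_prod, ← Finset.prod_mul_distrib]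
  refine prod_eq_neg_of_eq_of_ne i ?_ fun j hj => ?_
  · simpa [hcd, hαβ i hi] using conj_wauliEigvecs_mul_add_one (β i) hxy (c i)
  · simp [Pi.single_eq_of_ne hj]

lemma trace_diagonal_mul_conjTranspose_mul_diagonal_mul {m : Type*} [Fintype m] [DecidableEq m]
    (u v : m → ℂ) (N : Matrix m m ℂ) :
    (diagonal u * Nᴴ * diagonal v * N).trace = ∑ x, ∑ y, u x * v y * (conj (N y x) * N y x) := by
  simp only [trace, diag]
  refine Finset.sum_congr rfl fun x _ => ?_
  simp only [mul_apply (M := diagonal u * Nᴴ * diagonal v), mul_diagonal, diagonal_mul,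
    conjTranspose_apply, starRingEnd_apply]
  exact Finset.sum_congr rfl fun y _ => by ring

lemma QCoeff_conj_Qdual_eq_sum_normSq (lam : Fin n → ℝ) (F : Op n) (α β : Fin n → Fin 4) :
    QCoeff lam (Fᴴ * Qdual lam β * F) α = ((∑ x, ∑ y, wauliSpectrum lam α x *
      dualWauliSpectrum lam β y * Complex.normSq (framedKraus F α β y x) : ℝ) : ℂ) := by
  have h := trace_diagonal_mul_conjTranspose_mul_diagonal_mul
    (fun x => (wauliSpectrum lam α x : ℂ)) (fun y => (dualWauliSpectrum lam β y : ℂ))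
    (framedKraus F α β)
  simp only [framedKraus, conjTranspose_mul, conjTranspose_conjTranspose, Matrix.mul_assoc] at h
  rw [QCoeff, Qmat_eq_conj_diagonal, Qdual_eq_conj_diagonal]
  simp only [Matrix.mul_assoc]
  rw [trace_mul_comm]
  simp only [Matrix.mul_assoc]
  rw [h]
  push_cast
  simp only [framedKraus, Matrix.mul_assoc, Complex.normSq_eq_conj_mul_self]

lemma sum_framedKraus_conjTranspose_mul {m : ℕ} {F : Fin m → Op n}
    (hF : ∑ j, (F j)ᴴ * F j = 1) (α β : Fin n → Fin 4) :
    ∑ j, (framedKraus (F j) α β)ᴴ * framedKraus (F j) α β = 1 := by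
  have h : ∀ j, (framedKraus (F j) α β)ᴴ * framedKraus (F j) α β =
      (wauliFrame α)ᴴ * ((F j)ᴴ * F j) * wauliFrame α := fun j => by
    simp only [framedKraus, conjTranspose_mul, conjTranspose_conjTranspose, Matrix.mul_assoc]
    rw [← Matrix.mul_assoc (wauliFrame β), wauliFrame_mul_conjTranspose, Matrix.one_mul]
  simp only [h, ← Matrix.sum_mul, ← Matrix.mul_sum, hF, Matrix.mul_one,
    wauliFrame_conjTranspose_mul]

lemma sum_sum_normSq_framedKraus {m : ℕ} {F : Fin m → Op n}
    (hF : ∑ j, (F j)ᴴ * F j = 1) (α β : Fin n → Fin 4) (x : Idx n) :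
    ∑ y, ∑ j, Complex.normSq (framedKraus (F j) α β y x) = 1 := by
  have h := congr_fun₂ (sum_framedKraus_conjTranspose_mul hF α β) x x
  simp only [Matrix.sum_apply, mul_apply, conjTranspose_apply, one_apply_eq,
    ← starRingEnd_apply, ← Complex.normSq_eq_conj_mul_self] at h
  rw [Finset.sum_comm]
  exact_mod_cast h

lemma abs_sum_sum_mul_le {X : Type*} [Fintype X] {u v w : X → ℝ} {T : X → X → ℝ} {C : ℝ}
    (hT : ∀ x y, 0 ≤ T x y) (hrow : ∀ x, ∑ y, T x y = 1)
    (hv : ∀ x y, T x y ≠ 0 → |v y| ≤ C * w x) :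
    |∑ x, ∑ y, u x * v y * T x y| ≤ C * ∑ x, |u x| * w x :=
  calc |∑ x, ∑ y, u x * v y * T x y|
      ≤ ∑ x, ∑ y, |u x| * |v y| * T x y := by
        refine (Finset.abs_sum_le_sum_abs _ _).trans (Finset.sum_le_sum fun x _ => ?_)
        refine (Finset.abs_sum_le_sum_abs _ _).trans_eq (Finset.sum_congr rfl fun y _ => ?_)
        rw [abs_mul, abs_mul, abs_of_nonneg (hT x y)]
    _ ≤ ∑ x, ∑ y, |u x| * (C * w x) * T x y := by
        refine Finset.sum_le_sum fun x _ => Finset.sum_le_sum fun y _ => ?_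
        rcases eq_or_ne (T x y) 0 with h | h
        · simp [h]
        · exact mul_le_mul_of_nonneg_right
            (mul_le_mul_of_nonneg_left (hv x y h) (abs_nonneg _)) (hT x y)
    _ = ∑ x, |u x| * (C * w x) * ∑ y, T x y := by simp only [Finset.mul_sum]
    _ = C * ∑ x, |u x| * w x := by
        simp only [hrow, mul_one, Finset.mul_sum]
        exact Finset.sum_congr rfl fun x _ => by ring

lemma card_filter_mem_eq_ncard {α : Type*} [Fintype α] (S : Set α) [DecidablePred (· ∈ S)] :
    (Finset.univ.filter (· ∈ S)).card = S.ncard := by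
  rw [Set.ncard_eq_toFinset_card', Set.filter_mem_univ_eq_toFinset]

lemma prod_ite_mem_eq_pow_ncard {α M : Type*} [Fintype α] [CommMonoid M] (S : Set α)
    [DecidablePred (· ∈ S)] (a : M) : ∏ i, (if i ∈ S then a else 1) = a ^ S.ncard := by
  rw [Finset.prod_ite, Finset.prod_const, Finset.prod_const_one, mul_one,
    card_filter_mem_eq_ncard]

lemma card_filter_eqOn_compl (S : Set (Fin n)) [DecidablePred (· ∈ S)] (β : Fin n → Fin 4) :
    (Finset.univ.filter fun α : Fin n → Fin 4 => ∀ i ∉ S, α i = β i).card = 4 ^ S.ncard := by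
  have h : (Finset.univ.filter fun α : Fin n → Fin 4 => ∀ i ∉ S, α i = β i) =
      Fintype.piFinset fun i => if i ∈ S then Finset.univ else {β i} := by
    ext α
    simp only [Finset.mem_filter, Finset.mem_univ, true_and, Fintype.mem_piFinset]
    exact forall_congr' fun i => by split_ifs with hi <;> simp [hi]
  rw [h, Fintype.card_piFinset, ← prod_ite_mem_eq_pow_ncard]
  exact Finset.prod_congr rfl fun i _ => by split_ifs <;> simp

open Classical in
/-- The factor of `|d̃_β(y)|` outside `S`, written with `α, x` in place of `β, y` (which agree
with them there). -/
def absDualSpectrumOff (S : Set (Fin n)) (lam : Fin n → ℝ) (α : Fin n → Fin 4) (x : Idx n) : ℝ :=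
  ∏ i, if i ∈ S then 1 else |dualWauliEigvals (lam i) (α i) (x i)|

lemma sum_abs_wauliSpectrum_mul_absDualSpectrumOff {lam : Fin n → ℝ} (h0 : ∀ i, 0 ≤ lam i)
    (h1 : ∀ i, lam i ≤ 1) (S : Set (Fin n)) (α : Fin n → Fin 4) :
    ∑ x, |wauliSpectrum lam α x| * absDualSpectrumOff S lam α x = 1 := by
  classical
  simp only [wauliSpectrum, absDualSpectrumOff, Finset.abs_prod, ← Finset.prod_mul_distrib]
  rw [← Fintype.prod_sum fun i p => |wauliEigvals (lam i) (α i) p| *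
    if i ∈ S then 1 else |dualWauliEigvals (lam i) (α i) p|]
  refine Finset.prod_eq_one fun i _ => ?_
  split_ifs
  · simpa using sum_abs_wauliEigvals (h0 i) (h1 i) (α i)
  · exact sum_abs_wauliEigvals_mul_abs_dualWauliEigvals (h0 i) (h1 i) (α i)

lemma abs_dualWauliSpectrum_le {lam : Fin n → ℝ} {lmax : ℝ} (h0 : ∀ i, 0 ≤ lam i)
    (hle : ∀ i, lam i ≤ lmax) {S : Set (Fin n)} {α β : Fin n → Fin 4}
    (hαβ : ∀ i ∉ S, α i = β i) {x y : Idx n} (hxy : ∀ i ∉ S, x i = y i) :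
    |dualWauliSpectrum lam β y| ≤ (1 + lmax) ^ S.ncard * absDualSpectrumOff S lam α x := by
  classical
  calc |dualWauliSpectrum lam β y|
      = ∏ i, |dualWauliEigvals (lam i) (β i) (y i)| := Finset.abs_prod _ _
    _ ≤ ∏ i, (if i ∈ S then 1 + lmax else 1) *
          (if i ∈ S then 1 else |dualWauliEigvals (lam i) (α i) (x i)|) := by
        refine Finset.prod_le_prod (fun i _ => abs_nonneg _) fun i _ => ?_
        split_ifs with hi
        · linarith [abs_dualWauliEigvals_le (h0 i) (β i) (y i), hle i]
        · simp [hαβ i hi, hxy i hi]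
    _ = (1 + lmax) ^ S.ncard * absDualSpectrumOff S lam α x := by
        rw [Finset.prod_mul_distrib, prod_ite_mem_eq_pow_ncard, absDualSpectrumOff]

lemma QCoeff_sum (lam : Fin n → ℝ) {m : ℕ} (A : Fin m → Op n) (α : Fin n → Fin 4) :
    QCoeff lam (∑ j, A j) α = ∑ j, QCoeff lam (A j) α := by
  simp only [QCoeff, Matrix.mul_sum, trace_sum]

lemma norm_QCoeff_sum_conj_Qdual_le {lam : Fin n → ℝ} {lmax : ℝ} (h0 : ∀ i, 0 ≤ lam i)
    (h1 : ∀ i, lam i ≤ 1) (hle : ∀ i, lam i ≤ lmax) {S : Set (Fin n)} {m : ℕ}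
    {F : Fin m → Op n} (hS : ∀ j, SupportedOn S (F j)) (hF : ∑ j, (F j)ᴴ * F j = 1)
    {α β : Fin n → Fin 4} (hαβ : ∀ i ∉ S, α i = β i) :
    ‖QCoeff lam (∑ j, (F j)ᴴ * Qdual lam β * F j) α‖ ≤ (1 + lmax) ^ S.ncard := by
  set T : Idx n → Idx n → ℝ := fun x y => ∑ j, Complex.normSq (framedKraus (F j) α β y x)
  have hT : QCoeff lam (∑ j, (F j)ᴴ * Qdual lam β * F j) α =
      ((∑ x, ∑ y, wauliSpectrum lam α x * dualWauliSpectrum lam β y * T x y : ℝ) : ℂ) := by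
    simp only [QCoeff_sum, QCoeff_conj_Qdual_eq_sum_normSq, T, Finset.mul_sum]
    push_cast
    rw [Finset.sum_comm]
    refine Finset.sum_congr rfl fun x _ => ?_
    rw [Finset.sum_comm]
  have hagree : ∀ x y, T x y ≠ 0 → ∀ i ∉ S, x i = y i := fun x y hxy i hi => by
    by_contra hne
    exact hxy (Finset.sum_eq_zero fun j _ => by
      rw [framedKraus_apply_eq_zero (hS j) hαβ hi hne, map_zero])
  rw [hT, Complex.norm_real, Real.norm_eq_abs]
  calc _ ≤ (1 + lmax) ^ S.ncard * ∑ x, |wauliSpectrum lam α x| * absDualSpectrumOff S lam α x :=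
        abs_sum_sum_mul_le (fun x y => Finset.sum_nonneg fun j _ => Complex.normSq_nonneg _)
          (fun x => by rw [← sum_sum_normSq_framedKraus hF α β x])
          fun x y hxy => abs_dualWauliSpectrum_le h0 hle hαβ (hagree x y hxy)
    _ = (1 + lmax) ^ S.ncard := by
        rw [sum_abs_wauliSpectrum_mul_absDualSpectrumOff h0 h1, mul_one]

lemma Q1Norm_sum_conj_Qdual_le {lam : Fin n → ℝ} {lmax : ℝ} (h0 : ∀ i, 0 ≤ lam i)
    (h1 : ∀ i, lam i ≤ 1) (hle : ∀ i, lam i ≤ lmax) {S : Set (Fin n)} {m : ℕ}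
    {F : Fin m → Op n} (hS : ∀ j, SupportedOn S (F j)) (hF : ∑ j, (F j)ᴴ * F j = 1)
    (β : Fin n → Fin 4) :
    Q1Norm lam (∑ j, (F j)ᴴ * Qdual lam β * F j) ≤ 4 ^ S.ncard * (1 + lmax) ^ S.ncard := by
  classical
  have hsupp : ∀ α, ‖QCoeff lam (∑ j, (F j)ᴴ * Qdual lam β * F j) α‖ ≠ 0 →
      ∀ i ∉ S, α i = β i := fun α hα i hi => by
    by_contra hne
    exact hα (by simp [QCoeff_sum, QCoeff_conj_Qdual_eq_zero lam (hS _) hi hne])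
  rw [Q1Norm, ← Finset.sum_filter_of_ne fun α _ => hsupp α]
  calc _ ≤ (Finset.univ.filter fun α : Fin n → Fin 4 => ∀ i ∉ S, α i = β i).card •
          (1 + lmax) ^ S.ncard :=
        Finset.sum_le_card_nsmul _ _ _ fun α hα =>
          norm_QCoeff_sum_conj_Qdual_le h0 h1 hle hS hF (Finset.mem_filter.mp hα).2
    _ = 4 ^ S.ncard * (1 + lmax) ^ S.ncard := by
        rw [card_filter_eqOn_compl, nsmul_eq_mul, Nat.cast_pow, Nat.cast_ofNat]

theorem Q1Norm_adjoint_channel_le_general {n : ℕ} (lam : Fin n → ℝ)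
    (hlam : ∀ i, 0 ≤ lam i ∧ lam i < 1)
    (lmax : ℝ) (hmax : IsGreatest (Set.range lam) lmax)
    (S : Set (Fin n)) (k : ℕ) (hcard : S.ncard = k)
    (E Estar : SOp n) (hE : IsChannelOn S E) (hadj : IsHSAdjoint E Estar)
    (O : Op n) :
    Q1Norm lam (Estar O) ≤ 4 ^ k * (1 + lmax) ^ k * Q1Norm lam O ∧
    4 ^ k * (1 + lmax) ^ k * Q1Norm lam O
      ≤ 2 ^ (3 * k) * Q1Norm lam O := by
  obtain ⟨m, F, hS, hF, hkraus⟩ := hE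
  obtain ⟨⟨i₀, rfl⟩, hle⟩ := hmax
  have h0 : ∀ i, 0 ≤ lam i := fun i => (hlam i).1
  have h1 : ∀ i, lam i ≤ 1 := fun i => (hlam i).2.le
  subst hcard
  refine ⟨Q1Norm_map_le lam Estar (fun β => ?_) O, ?_⟩
  · rw [hadj.apply_eq_sum hkraus]
    exact Q1Norm_sum_conj_Qdual_le h0 h1 (fun i => hle ⟨i, rfl⟩) hS hF β
  · have h8 : 4 * (1 + lam i₀) ≤ 8 := by linarith [(hlam i₀).2]
    refine mul_le_mul_of_nonneg_right ?_ (Finset.sum_nonneg fun _ _ => norm_nonneg _)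
    rw [← mul_pow, pow_mul]
    exact pow_le_pow_left₀ (by linarith [h0 i₀]) (by norm_num [h8]) _

/-- growth of the `Q1` norm under the adjoint of a channel
acting on `k` qubits, with `λ = max_i λ_i`. -/
theorem Q1Norm_adjoint_channel_le {n : ℕ} (hn : 0 < n) (lam : Fin n → ℝ)
    (hlam : ∀ i, 0 ≤ lam i ∧ lam i < 1)
    (lmax : ℝ) (hmax : IsGreatest (Set.range lam) lmax)
    (S : Set (Fin n)) (k : ℕ) (hcard : S.ncard = k)
    (E Estar : SOp n) (hE : IsChannelOn S E) (hadj : IsHSAdjoint E Estar)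
    (O : Op n) :
    Q1Norm lam (Estar O) ≤ 4 ^ k * (1 + lmax) ^ k * Q1Norm lam O ∧
    4 ^ k * (1 + lmax) ^ k * Q1Norm lam O
      ≤ 2 ^ (3 * k) * Q1Norm lam O :=
  Q1Norm_adjoint_channel_le_general lam hlam lmax hmax S k hcard E Estar hE hadj O

end

end SSP
end
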